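/- arXiv:2405.03347 — 3 statements merged into one kernel-verified Lean document; each statement's English description precedes it below -/
import Mathlib

section
/- Let q ≥ 2 and n ≥ 1 be integers and suppose positive integers n, M satisfy (1 + n(q-1) + n(n-1)/2 * (q-1)^2) * M = q^n. Then with x = 2n(q-1) + 3 - q and D_q = 8 - (q-3)^2, there exists a positive integer y dividing a power of q such that x^2 + D_q = 8y, namely y = q^n / M satisfies x^2 + D_q = 8 * q^n / M. -/
theorem perfect_code_to_RN (q n M : ℤ) (hq : 2 ≤ q) (hn : 1 ≤ n) (hM : 1 ≤ M)
    (h : (1 + n * (q - 1) + n * (n - 1) / 2 * (q - 1) ^ 2) * M = q ^ n.toNat) :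
    ∃ y : ℤ, 0 < y ∧ (∃ k : ℕ, y ∣ q ^ k) ∧
      (2 * n * (q - 1) + 3 - q) ^ 2 + (8 - (q - 3) ^ 2) = 8 * y ∧
      y = q ^ n.toNat / M := by
  set B : ℤ := 1 + n * (q - 1) + n * (n - 1) / 2 * (q - 1) ^ 2 with hBdef
  have hdvd : (2 : ℤ) ∣ n * (n - 1) := by
    have := Int.even_mul_succ_self (n - 1)
    rw [show (n - 1) * (n - 1 + 1) = n * (n - 1) by ring] at this
    exact this.two_dvd
  have key : 2 * (n * (n - 1) / 2) = n * (n - 1) := Int.mul_ediv_cancel' hdvd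
  have hqpos : (0 : ℤ) < q := by linarith
  have hpow : (0 : ℤ) < q ^ n.toNat := pow_pos hqpos _
  have hBpos : 0 < B := by nlinarith [h]
  refine ⟨B, hBpos, ⟨n.toNat, ⟨M, h.symm⟩⟩, ?_, ?_⟩
  · have h8 : 8 * B = 8 + 8 * n * (q - 1) + 4 * (2 * (n * (n - 1) / 2)) * (q - 1) ^ 2 := by
      rw [hBdef]; ring
    rw [h8, key]; ring
  · exact (Int.ediv_eq_of_eq_mul_left (by linarith) h.symm).symm
end

section
/- For q = 21 and n = 52, the polynomial L_2(x) = (q-1)^2*(n-x)(n-x-1)/2 - (q-1)(x-1)(n-x) + (x-1)(x-2)/2 does not have two distinct integer roots in the interval [1, 52]. -/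
lemma no_root (x : ℤ) (h1 : 1 ≤ x) (h2 : x ≤ 52) :
    (21 - 1) ^ 2 * ((52 - x) * (52 - x - 1)) / 2
      - (21 - 1) * (x - 1) * (52 - x) + (x - 1) * (x - 2) / 2 ≠ 0 := by
  interval_cases x <;> decide

theorem lloyd_fails_q21 :
    ¬ ∃ x₁ x₂ : ℤ, 1 ≤ x₁ ∧ x₁ < x₂ ∧ x₂ ≤ 52 ∧
      ((21 - 1) ^ 2 * ((52 - x₁) * (52 - x₁ - 1)) / 2
        - (21 - 1) * (x₁ - 1) * (52 - x₁) + (x₁ - 1) * (x₁ - 2) / 2 = 0) ∧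
      ((21 - 1) ^ 2 * ((52 - x₂) * (52 - x₂ - 1)) / 2
        - (21 - 1) * (x₂ - 1) * (52 - x₂) + (x₂ - 1) * (x₂ - 2) / 2 = 0) := by
  rintro ⟨x₁, x₂, h1, hlt, h52, e1, _⟩
  exact no_root x₁ h1 (le_of_lt (lt_of_lt_of_le hlt h52)) e1
end

section
/- For q = 46 and n = 93, the polynomial L_2(x) = (q-1)^2*(n-x)(n-x-1)/2 - (q-1)(x-1)(n-x) + (x-1)(x-2)/2 does not have two distinct integer roots in the interval [1, 93]. -/
theorem lloyd_fails_q46 :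
    ¬ ∃ x₁ x₂ : ℤ, 1 ≤ x₁ ∧ x₁ < x₂ ∧ x₂ ≤ 93 ∧
      ((46 - 1) ^ 2 * ((93 - x₁) * (93 - x₁ - 1)) / 2
        - (46 - 1) * (x₁ - 1) * (93 - x₁) + (x₁ - 1) * (x₁ - 2) / 2 = 0) ∧
      ((46 - 1) ^ 2 * ((93 - x₂) * (93 - x₂ - 1)) / 2
        - (46 - 1) * (x₂ - 1) * (93 - x₂) + (x₂ - 1) * (x₂ - 2) / 2 = 0) := by
  rintro ⟨x₁, x₂, h1, h2, h3, h4, h5⟩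
  have hx : x₁ ≤ 92 := by omega
  interval_cases x₁ <;> first
    | (norm_num at h4; done)
    | (have hx2 : x₂ = 93 := by omega
       subst hx2
       norm_num at h5)
end
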